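/- For all z, ζ ∈ 𝔻, the Berezin kernel K(z, ζ) = (1 − |z|²)²/|1 − ζ·conj(z)|⁴ satisfies the symmetry Δ_z [ (1 − |z|²)²/|1 − ζ·conj(z)|⁴ ] = Δ_ζ [ (1 − |ζ|²)²/|1 − conj(ζ)·z|⁴ ], where Δ_z denotes the Laplacian (∂²/∂x² + ∂²/∂y²)/4 = ∂²/∂z∂conj(z) taken with respect to the variable z, and Δ_ζ the same operator with respect to ζ. -/

import Mathlib

/-!
Expanding `(1 - w w̄)² = 1 - 2 w w̄ + w² w̄²` separates the kernel into a sum of three products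
`f(w) g(w̄)` with `f`, `g` holomorphic, and `Δ (f(w) g(w̄)) = f'(w) g'(w̄)`. This gives
`Δ_z K(z, ζ) = (4|ζ|² + 4|z|² - 2|1 + ζ̄ z|²) / |1 - ζ̄ z|⁶`, which is symmetric in `z` and `ζ`.
-/

open MeasureTheory Complex Set

noncomputable section

/-- The open unit disk in the complex plane. -/
def unitDisk : Set ℂ := {z : ℂ | ‖z‖ < 1}

/-- Normalized Lebesgue area measure `dA = dx dy / π` on the unit disk. -/
def dA : Measure ℂ := (ENNReal.ofReal Real.pi)⁻¹ • (volume.restrict unitDisk)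

/-- The Berezin transform of a function `u`. -/
def berezin (u : ℂ → ℂ) (z : ℂ) : ℂ :=
  ∫ ζ, u ζ * (((1 - ‖z‖ ^ 2) ^ 2 / ‖1 - ζ * (starRingEnd ℂ) z‖ ^ 4 : ℝ) : ℂ) ∂dA

/-- The Möbius automorphism `φ_a(z) = (z - a)/(1 - conj(a) z)` of the unit disk. -/
def phiMoebius (a z : ℂ) : ℂ := (z - a) / (1 - (starRingEnd ℂ) a * z)

/-- The (unnormalized) Laplacian `∂²/∂x² + ∂²/∂y²` of `h`, computed via real Fréchet derivatives. -/
def lap (h : ℂ → ℂ) (z : ℂ) : ℂ :=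
  fderiv ℝ (fun w => fderiv ℝ h w 1) z 1 +
  fderiv ℝ (fun w => fderiv ℝ h w Complex.I) z Complex.I

/-- The normalized Laplacian `Δ = ∂²/∂z∂conj(z) = (1/4)(∂²/∂x² + ∂²/∂y²)`. -/
def nlap (h : ℂ → ℂ) (z : ℂ) : ℂ := (1 / 4 : ℂ) * lap h z

/-- A function is harmonic on the unit disk if it is twice continuously differentiable there
and its Laplacian vanishes on the disk. -/
def HarmonicOnDisk (h : ℂ → ℂ) : Prop :=
  ContDiffOn ℝ 2 h unitDisk ∧ ∀ z ∈ unitDisk, lap h z = 0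


open Filter Topology ComplexConjugate

section MulCompConj

variable {f g : ℂ → ℂ} {w : ℂ}

theorem hasFDerivAt_mul_comp_conj {f' g' : ℂ} (hf : HasDerivAt f f' w)
    (hg : HasDerivAt g g' (conj w)) :
    HasFDerivAt (fun u => f u * g (conj u))
      ((f' * g (conj w)) • ContinuousLinearMap.id ℝ ℂ + (f w * g') • (conjCLE : ℂ →L[ℝ] ℂ)) w := by
  have hgc := (hg.hasFDerivAt.restrictScalars ℝ).comp w (conjCLE : ℂ →L[ℝ] ℂ).hasFDerivAt
  refine ((hf.hasFDerivAt.restrictScalars ℝ).mul hgc).congr_fderiv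
    (ContinuousLinearMap.ext fun d => ?_)
  simp only [Function.comp_apply, add_apply, smul_apply, ContinuousLinearMap.comp_apply,
    ContinuousLinearEquiv.coe_coe, ContinuousAlgEquiv.coeCLE_apply, conjCAE_apply,
    ContinuousLinearMap.coe_restrictScalars', ContinuousLinearMap.toSpanSingleton_apply, smul_eq_mul,
    ContinuousLinearMap.id_apply]
  ring

theorem contDiffAt_mul_comp_conj {n : WithTop ℕ∞} (hf : AnalyticAt ℂ f w)
    (hg : AnalyticAt ℂ g (conj w)) : ContDiffAt ℝ n (fun u => f u * g (conj u)) w :=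
  (hf.contDiffAt.restrict_scalars ℝ).mul
    ((hg.contDiffAt.restrict_scalars ℝ).comp w (conjCLE : ℂ →L[ℝ] ℂ).contDiff.contDiffAt)

theorem fderiv_fderiv_mul_comp_conj_apply (hf : AnalyticAt ℂ f w)
    (hg : AnalyticAt ℂ g (conj w)) (v : ℂ) :
    fderiv ℝ (fun u => fderiv ℝ (fun x => f x * g (conj x)) u v) w v =
      deriv (deriv f) w * g (conj w) * v ^ 2 + 2 * (deriv f w * deriv g (conj w)) * (v * conj v)
        + f w * deriv (deriv g) (conj w) * conj v ^ 2 := by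
  have hf_near : ∀ᶠ u in 𝓝 w, AnalyticAt ℂ f u := hf.eventually_analyticAt
  have hg_near : ∀ᶠ u in 𝓝 w, AnalyticAt ℂ g (conj u) :=
    (Complex.continuous_conj.tendsto w).eventually hg.eventually_analyticAt
  have first : (fun u => fderiv ℝ (fun x => f x * g (conj x)) u v) =ᶠ[𝓝 w]
      fun u => deriv f u * g (conj u) * v + f u * deriv g (conj u) * conj v := by
    filter_upwards [hf_near, hg_near] with u hfu hgu
    rw [(hasFDerivAt_mul_comp_conj hfu.differentiableAt.hasDerivAt
      hgu.differentiableAt.hasDerivAt).fderiv]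
    simp
  have h₁ := hasFDerivAt_mul_comp_conj hf.deriv.differentiableAt.hasDerivAt
    hg.differentiableAt.hasDerivAt
  have h₂ := hasFDerivAt_mul_comp_conj hf.differentiableAt.hasDerivAt
    hg.deriv.differentiableAt.hasDerivAt
  rw [first.fderiv_eq, ((h₁.mul_const v).fun_add (h₂.mul_const (conj v))).fderiv]
  simp only [smul_add, add_apply, smul_apply, ContinuousLinearMap.id_apply, smul_eq_mul,
    ContinuousLinearEquiv.coe_coe, ContinuousAlgEquiv.coeCLE_apply, conjCAE_apply]
  ring

theorem nlap_mul_comp_conj (hf : AnalyticAt ℂ f w) (hg : AnalyticAt ℂ g (conj w)) :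
    nlap (fun u => f u * g (conj u)) w = deriv f w * deriv g (conj w) := by
  rw [nlap, lap, fderiv_fderiv_mul_comp_conj_apply hf hg,
    fderiv_fderiv_mul_comp_conj_apply hf hg]
  simp only [map_one, conj_I]
  ring_nf
  simp only [I_sq]
  ring

end MulCompConj
theorem nlap_add {h₁ h₂ : ℂ → ℂ} {z : ℂ} (hh₁ : ContDiffAt ℝ 2 h₁ z)
    (hh₂ : ContDiffAt ℝ 2 h₂ z) :
    nlap (fun w => h₁ w + h₂ w) z = nlap h₁ z + nlap h₂ z := by
  have hd : ∀ {h : ℂ → ℂ} (v : ℂ), ContDiffAt ℝ 2 h z →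
      DifferentiableAt ℝ (fun w => fderiv ℝ h w v) z := fun v hh =>
    ((hh.fderiv_right (m := 1) le_rfl).differentiableAt one_ne_zero).clm_apply
      (differentiableAt_const v)
  have second : ∀ v, fderiv ℝ (fun w => fderiv ℝ (fun w => h₁ w + h₂ w) w v) z v =
      fderiv ℝ (fun w => fderiv ℝ h₁ w v) z v + fderiv ℝ (fun w => fderiv ℝ h₂ w v) z v := by
    intro v
    have first : (fun w => fderiv ℝ (fun w => h₁ w + h₂ w) w v) =ᶠ[𝓝 z]
        fun w => fderiv ℝ h₁ w v + fderiv ℝ h₂ w v := by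
      filter_upwards [hh₁.eventually (by simp), hh₂.eventually (by simp)] with w hw₁ hw₂
      rw [fderiv_fun_add (hw₁.differentiableAt two_ne_zero) (hw₂.differentiableAt two_ne_zero)]
      rfl
    rw [first.fderiv_eq, fderiv_fun_add (hd v hh₁) (hd v hh₂)]
    rfl
  simp only [nlap, lap, second]
  ring

theorem hasDerivAt_pow_div_one_sub_mul_sq (b : ℂ) (n : ℕ) {u : ℂ} (h : 1 - b * u ≠ 0) :
    HasDerivAt (fun u => u ^ n / (1 - b * u) ^ 2)
      ((n * u ^ (n - 1) * (1 - b * u) + 2 * b * u ^ n) / (1 - b * u) ^ 3) u := by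
  have hden : HasDerivAt (fun u => (1 - b * u) ^ 2) (2 * (1 - b * u) * -b) u := by
    simpa using (((hasDerivAt_id u).const_mul b).const_sub 1).fun_pow 2
  refine ((hasDerivAt_pow n u).div hden (pow_ne_zero 2 h)).congr_deriv ?_
  field_simp
  ring

theorem analyticAt_pow_div_one_sub_mul_sq (b : ℂ) (n : ℕ) {u : ℂ} (h : 1 - b * u ≠ 0) :
    AnalyticAt ℂ (fun u => u ^ n / (1 - b * u) ^ 2) u := by
  fun_prop (disch := exact pow_ne_zero 2 h)

theorem one_sub_conj_mul_ne_zero_of_norm_lt_one {a b : ℂ} (ha : ‖a‖ < 1) (hb : ‖b‖ < 1) :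
    1 - conj a * b ≠ 0 := by
  have hlt : ‖conj a * b‖ < 1 := by
    rw [norm_mul, Complex.norm_conj]
    exact mul_lt_one_of_nonneg_of_lt_one_left (norm_nonneg a) ha hb.le
  rw [sub_ne_zero]
  rintro h
  rw [← h, norm_one] at hlt
  exact lt_irrefl 1 hlt

-- Where `1 - ζ w̄ = 0` both sides are `0` (division by zero).
theorem berezinKernel_eq_sum (ζ w : ℂ) :
    (((1 - ‖w‖ ^ 2) ^ 2 / ‖1 - ζ * conj w‖ ^ 4 : ℝ) : ℂ) =
      w ^ 0 / (1 - conj ζ * w) ^ 2 * (conj w ^ 0 / (1 - ζ * conj w) ^ 2)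
      + -2 * (w ^ 1 / (1 - conj ζ * w) ^ 2) * (conj w ^ 1 / (1 - ζ * conj w) ^ 2)
      + w ^ 2 / (1 - conj ζ * w) ^ 2 * (conj w ^ 2 / (1 - ζ * conj w) ^ 2) := by
  have hconj : conj (1 - ζ * conj w) = 1 - conj ζ * w := by simp
  rw [show (4 : ℕ) = 2 * 2 from rfl, pow_mul]
  push_cast
  rw [← mul_conj', ← mul_conj', hconj, mul_pow, div_eq_mul_inv, mul_inv]
  ring

theorem nlap_berezinKernel {ζ z : ℂ} (h : 1 - conj ζ * z ≠ 0) :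
    nlap (fun w => (((1 - ‖w‖ ^ 2) ^ 2 / ‖1 - ζ * conj w‖ ^ 4 : ℝ) : ℂ)) z =
      (4 * (ζ * conj ζ) + 4 * (z * conj z) - 2 * ((1 + conj ζ * z) * (1 + ζ * conj z)))
        / ((1 - conj ζ * z) * (1 - ζ * conj z)) ^ 3 := by
  have h' : 1 - ζ * conj z ≠ 0 := by
    simpa using (map_ne_zero (starRingEnd ℂ)).mpr h
  have hf n := analyticAt_pow_div_one_sub_mul_sq (conj ζ) n h
  have hg n := analyticAt_pow_div_one_sub_mul_sq ζ n h'
  have hf_neg_two : AnalyticAt ℂ (fun u => -2 * (u ^ 1 / (1 - conj ζ * u) ^ 2)) z :=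
    analyticAt_const.mul (hf 1)
  have hc₀ := contDiffAt_mul_comp_conj (n := 2) (hf 0) (hg 0)
  have hc₁ := contDiffAt_mul_comp_conj (n := 2) hf_neg_two (hg 1)
  have hc₂ := contDiffAt_mul_comp_conj (n := 2) (hf 2) (hg 2)
  simp only [berezinKernel_eq_sum]
  rw [nlap_add (hc₀.add hc₁) hc₂, nlap_add hc₀ hc₁,
    nlap_mul_comp_conj (hf 0) (hg 0), nlap_mul_comp_conj hf_neg_two (hg 1),
    nlap_mul_comp_conj (hf 2) (hg 2), deriv_const_mul _ (hf 1).differentiableAt]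
  simp only [(hasDerivAt_pow_div_one_sub_mul_sq _ _ h).deriv,
    (hasDerivAt_pow_div_one_sub_mul_sq _ _ h').deriv]
  field_simp
  ring

theorem stmt15 (z ζ : ℂ) (hz : z ∈ unitDisk) (hζ : ζ ∈ unitDisk) :
    nlap (fun w => (((1 - ‖w‖ ^ 2) ^ 2
        / ‖1 - ζ * (starRingEnd ℂ) w‖ ^ 4 : ℝ) : ℂ)) z
      = nlap (fun w => (((1 - ‖w‖ ^ 2) ^ 2
        / ‖1 - (starRingEnd ℂ) w * z‖ ^ 4 : ℝ) : ℂ)) ζ := by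
  simp_rw [mul_comm (conj _) z]
  rw [nlap_berezinKernel (one_sub_conj_mul_ne_zero_of_norm_lt_one hζ hz),
    nlap_berezinKernel (one_sub_conj_mul_ne_zero_of_norm_lt_one hz hζ)]
  ring
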